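/- arXiv:1208.3076 — 3 statements merged into one kernel-verified Lean document; each statement's English description precedes it below -/
import Mathlib

section
/- Let W be a simply connected topological manifold and G a group. Then every locally constant G-valued Čech 1-cocycle on an open cover of W becomes a coboundary after passing to a refinement: given an open cover (U_i)_{i ∈ I} of W and locally constant maps g_{ij} : U_i ∩ U_j → G (for all i, j with U_i ∩ U_j ≠ ∅) satisfying g_{ii} = 1 and the cocycle condition g_{ki} · g_{jk} · g_{ij} = 1 on every nonempty triple intersection U_i ∩ U_j ∩ U_k, there exist an open cover (V_a)_{a ∈ A} of W refining (U_i) via a map τ : A → I with V_a ⊆ U_{τ(a)}, and locally constant maps h_a : V_a → G, such that g_{τ(a)τ(b)} = h_b⁻¹ · h_a on V_a ∩ V_b for all a, b with V_a ∩ V_b ≠ ∅. -/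
/-!
A locally constant cocycle is the gluing data of a covering space of `W` with discrete fibre `G`:
a point over `x` is a family of coordinates, one in each chart containing `x`, related by the
transition functions `g`. Since `W` is simply connected and locally path connected, the identity
of `W` lifts to a continuous section of this covering. The chart coordinates of that section
are locally constant, and their compatibility is exactly the coboundary equation.
-/

open Set

structure LocallyConstantCocycle (W : Type*) [TopologicalSpace W] (G : Type*) [Group G]
    (I : Type*) where
  U : I → Set W
  g : I → I → W → G
  isOpen : ∀ i, IsOpen (U i)
  isLocallyConstant : ∀ i j, (U i ∩ U j).Nonempty →
    IsLocallyConstant (fun x : ↥(U i ∩ U j) => g i j x)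
  self_eq_one : ∀ i, ∀ x ∈ U i, g i i x = 1
  cocycle : ∀ i j k, ∀ x ∈ U i ∩ U j ∩ U k, g k i x * g j k x * g i j x = 1

namespace LocallyConstantCocycle

variable {W : Type*} [TopologicalSpace W] {G : Type*} [Group G] {I : Type*}
  (c : LocallyConstantCocycle W G I)

theorem g_trans {i j k : I} {x : W} (hi : x ∈ c.U i) (hj : x ∈ c.U j) (hk : x ∈ c.U k) :
    c.g i k x = c.g j k x * c.g i j x := by
  have hki := c.cocycle i j k x ⟨⟨hi, hj⟩, hk⟩
  have hik := c.cocycle i k i x ⟨⟨hi, hk⟩, hi⟩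
  rw [c.self_eq_one i x hi, one_mul] at hik
  rw [mul_assoc] at hki
  rw [eq_inv_of_mul_eq_one_right hik, eq_inv_of_mul_eq_one_right hki]

theorem isOpen_setOf_g_eq (i j : I) (a : G) :
    IsOpen {x | x ∈ c.U i ∧ x ∈ c.U j ∧ c.g i j x = a} := by
  rcases (c.U i ∩ c.U j).eq_empty_or_nonempty with hempty | hne
  · convert isOpen_empty
    exact eq_empty_of_forall_notMem fun x hx => hempty.subset ⟨hx.1, hx.2.1⟩
  · convert ((c.isOpen i).inter (c.isOpen j)).isOpenMap_subtype_val _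
      ((c.isLocallyConstant i j hne).isOpen_fiber a) using 1
    ext x
    simp only [mem_ofPred_eq, mem_image, Subtype.exists, mem_inter_iff]
    aesop

/-- The coordinates in charts not containing `base` are normalised to `1`, so that the fibre over
a point of `U i` is identified with `G` by `coord i`. -/
@[ext]
structure TotalSpace where
  base : W
  coord : I → G
  coord_eq : ∀ i j, base ∈ c.U i → base ∈ c.U j → coord j = c.g i j base * coord i
  coord_of_notMem : ∀ i, base ∉ c.U i → coord i = 1

namespace TotalSpace

variable {c}

def sheet (i : I) (a : G) : Set c.TotalSpace := {e | e.base ∈ c.U i ∧ e.coord i = a}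

instance : TopologicalSpace c.TotalSpace :=
  .induced base ‹_› ⊓ .generateFrom {s | ∃ i a, s = sheet i a}

theorem continuous_base : Continuous (base : c.TotalSpace → W) :=
  continuous_iff_le_induced.2 inf_le_left

theorem isOpen_sheet (i : I) (a : G) : IsOpen (sheet i a : Set c.TotalSpace) :=
  (inf_le_right : _ ≤ TopologicalSpace.generateFrom _) _
    (TopologicalSpace.isOpen_generateFrom_of_mem ⟨i, a, rfl⟩)

theorem continuous_iff {Y : Type*} [TopologicalSpace Y] {f : Y → c.TotalSpace} :
    Continuous f ↔ Continuous (base ∘ f) ∧ ∀ i a, IsOpen (f ⁻¹' sheet i a) := by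
  refine (continuous_inf_rng (t₂ := .induced base ‹_›)
    (t₃ := .generateFrom {s | ∃ i a, s = (sheet i a : Set c.TotalSpace)})).trans ?_
  rw [continuous_induced_rng, continuous_generateFrom_iff]
  exact and_congr_right' ⟨fun h i a => h _ ⟨i, a, rfl⟩, fun h _ ⟨i, a, hs⟩ => hs ▸ h i a⟩

open scoped Classical in
noncomputable def ofChart (i : I) (a : G) (x : W) (hx : x ∈ c.U i) : c.TotalSpace where
  base := x
  coord j := if x ∈ c.U j then c.g i j x * a else 1
  coord_eq j k hj hk := by rw [if_pos hj, if_pos hk, ← mul_assoc, ← c.g_trans hx hj hk]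
  coord_of_notMem _ hj := if_neg hj

theorem coord_ofChart_self (i : I) (a : G) (x : W) (hx : x ∈ c.U i) :
    (ofChart i a x hx).coord i = a := by
  simp [ofChart, hx, c.self_eq_one i x hx]

theorem ofChart_coord (e : c.TotalSpace) {i : I} (hi : e.base ∈ c.U i) :
    ofChart i (e.coord i) e.base hi = e := by
  ext j
  · rfl
  · by_cases hj : e.base ∈ c.U j
    · simp [ofChart, hj, e.coord_eq i j hi hj]
    · simp [ofChart, hj, e.coord_of_notMem j hj]

theorem continuous_ofChart (i : I) (a : G) :
    Continuous fun x : c.U i => ofChart i a x.1 x.2 := by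
  refine continuous_iff.2 ⟨continuous_subtype_val, fun j b => ?_⟩
  convert (c.isOpen_setOf_g_eq i j (b * a⁻¹)).preimage continuous_subtype_val using 1
  ext x
  simp +contextual [sheet, ofChart, eq_mul_inv_iff_mul_eq]

noncomputable def localTrivialization [TopologicalSpace G] [DiscreteTopology G] (i : I) :
    (base : c.TotalSpace → W) ⁻¹' c.U i ≃ₜ c.U i × G where
  toFun e := (⟨e.1.base, e.2⟩, e.1.coord i)
  invFun p := ⟨ofChart i p.2 p.1 p.1.2, p.1.2⟩
  left_inv e := Subtype.ext (ofChart_coord e.1 e.2)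
  right_inv p := Prod.ext rfl (coord_ofChart_self i p.2 p.1.1 p.1.2)
  continuous_toFun := by
    refine ((continuous_base.comp continuous_subtype_val).subtype_mk _).prodMk
      (continuous_discrete_rng.2 fun a => ?_)
    convert (isOpen_sheet i a).preimage continuous_subtype_val using 1
    ext e
    simp [sheet, show e.1.base ∈ c.U i from e.2]
  continuous_invFun :=
    (continuous_prod_of_discrete_right.2 fun a => continuous_ofChart i a).subtype_mk _

theorem isCoveringMap_base (hU : ⋃ i, c.U i = univ) :
    IsCoveringMap (base : c.TotalSpace → W) := by
  let _ : TopologicalSpace G := ⊥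
  have : DiscreteTopology G := ⟨rfl⟩
  intro x
  obtain ⟨i, hi⟩ := mem_iUnion.1 (hU ▸ mem_univ x)
  exact IsEvenlyCovered.to_isEvenlyCovered_preimage ⟨inferInstance, c.U i, hi, c.isOpen i,
    (c.isOpen i).preimage continuous_base, localTrivialization i, fun _ => rfl⟩

end TotalSpace

open TotalSpace in
theorem exists_isLocallyConstant_coboundary [SimplyConnectedSpace W] [LocallyPathConnectedSpace W]
    (hU : ⋃ i, c.U i = univ) :
    ∃ h : I → W → G, (∀ i, IsLocallyConstant fun x : c.U i => h i x) ∧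
      ∀ i j, ∀ x ∈ c.U i ∩ c.U j, c.g i j x = (h j x)⁻¹ * h i x := by
  obtain ⟨x₀⟩ : Nonempty W := inferInstance
  obtain ⟨i₀, hx₀⟩ := mem_iUnion.1 (hU ▸ mem_univ x₀)
  obtain ⟨F, ⟨-, hF⟩, -⟩ := (isCoveringMap_base hU).existsUnique_continuousMap_lifts
    (.id W) x₀ (ofChart i₀ 1 x₀ hx₀) rfl
  have hbase (x : W) : (F x).base = x := congr_fun hF x
  refine ⟨fun i x => ((F x).coord i)⁻¹, fun i => ?_, fun i j x hx => ?_⟩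
  · refine IsLocallyConstant.inv (IsLocallyConstant.iff_isOpen_fiber.2 fun a => ?_)
    convert (isOpen_sheet i a).preimage (F.continuous.comp continuous_subtype_val) using 1
    ext x
    simp [sheet, hbase]
  · have hx' : (F x).base ∈ c.U i ∩ c.U j := (hbase x).symm ▸ hx
    rw [inv_inv, (F x).coord_eq i j hx'.1 hx'.2, hbase, mul_inv_cancel_right]

end LocallyConstantCocycle

theorem locallyConstant_cech_one_cocycle_is_coboundary_general
    {n : ℕ} (W : Type) [TopologicalSpace W]
    [ChartedSpace (EuclideanSpace ℝ (Fin n)) W]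
    [SimplyConnectedSpace W]
    (G : Type) [Group G]
    {I : Type} (U : I → Set W) (hUopen : ∀ i, IsOpen (U i))
    (hUcover : ⋃ i, U i = Set.univ)
    (g : I → I → W → G)
    (hgloc : ∀ i j, (U i ∩ U j).Nonempty →
      IsLocallyConstant (fun x : ↥(U i ∩ U j) => g i j x))
    (hgid : ∀ i, ∀ x ∈ U i, g i i x = 1)
    (hgcocycle : ∀ i j k, ∀ x ∈ U i ∩ U j ∩ U k,
      g k i x * g j k x * g i j x = 1) :
    ∃ (A : Type) (V : A → Set W) (τ : A → I) (h : A → W → G),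
      (∀ a, IsOpen (V a)) ∧
      (⋃ a, V a = Set.univ) ∧
      (∀ a, V a ⊆ U (τ a)) ∧
      (∀ a, IsLocallyConstant (fun x : ↥(V a) => h a x)) ∧
      (∀ a b, (V a ∩ V b).Nonempty →
        ∀ x ∈ V a ∩ V b, g (τ a) (τ b) x = (h b x)⁻¹ * h a x) := by
  have := ChartedSpace.locallyPathConnectedSpace (EuclideanSpace ℝ (Fin n)) W
  obtain ⟨h, hloc, hcob⟩ := LocallyConstantCocycle.exists_isLocallyConstant_coboundary
    ⟨U, g, hUopen, hgloc, hgid, hgcocycle⟩ hUcover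
  exact ⟨I, U, id, h, hUopen, hUcover, fun _ => subset_rfl, hloc, fun a b _ => hcob a b⟩

/-- On a simply connected topological manifold `W`, every locally
constant `G`-valued Čech 1-cocycle on an open cover becomes a coboundary after
passing to a refinement. -/
theorem locallyConstant_cech_one_cocycle_is_coboundary
    {n : ℕ} (W : Type) [TopologicalSpace W] [T2Space W]
    [SecondCountableTopology W] [ChartedSpace (EuclideanSpace ℝ (Fin n)) W]
    [SimplyConnectedSpace W]
    (G : Type) [Group G]
    {I : Type} (U : I → Set W) (hUopen : ∀ i, IsOpen (U i))
    (hUcover : ⋃ i, U i = Set.univ)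
    (g : I → I → W → G)
    (hgloc : ∀ i j, (U i ∩ U j).Nonempty →
      IsLocallyConstant (fun x : ↥(U i ∩ U j) => g i j x))
    (hgid : ∀ i, ∀ x ∈ U i, g i i x = 1)
    (hgcocycle : ∀ i j k, ∀ x ∈ U i ∩ U j ∩ U k,
      g k i x * g j k x * g i j x = 1) :
    ∃ (A : Type) (V : A → Set W) (τ : A → I) (h : A → W → G),
      (∀ a, IsOpen (V a)) ∧
      (⋃ a, V a = Set.univ) ∧
      (∀ a, V a ⊆ U (τ a)) ∧
      (∀ a, IsLocallyConstant (fun x : ↥(V a) => h a x)) ∧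
      (∀ a b, (V a ∩ V b).Nonempty →
        ∀ x ∈ V a ∩ V b, g (τ a) (τ b) x = (h b x)⁻¹ * h a x) :=
  locallyConstant_cech_one_cocycle_is_coboundary_general (n := n) W G U hUopen hUcover g hgloc hgid
    hgcocycle
end

section
/- Let M be a finite-dimensional smooth (C^∞) manifold without boundary, Hausdorff and second countable, let π : M → ℝ^m be a smooth proper map (preimages of compact sets are compact), let v ∈ ℝ^m, and let χ be a smooth vector field on M satisfying dπ_p(χ(p)) = v for every p ∈ M. Then the flow of χ is complete: for every x ∈ M there exists a curve γ : ℝ → M with γ(0) = x which is an integral curve of χ on all of ℝ (i.e., γ'(t) = χ(γ(t)) for all t ∈ ℝ). -/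
/-!
Along an integral curve `γ` of `χ` the curve `π ∘ γ` has constant velocity `v`, so
`π (γ t) = π (γ 0) + t • v`. Hence every integral curve through `x` defined on `(-a, a)` with
`a ≤ T` stays in the compact set `π ⁻¹' closedBall (π x) (T * ‖v‖)`, on which integral curves
exist for a uniform time `ε`. If the half-lengths `a` of the intervals `(-a, a)` carrying an
integral curve through `x` had a finite supremum `T`, gluing curves of half-length `ε` at both
ends of such a curve with `a > T - ε / 4` would give one on `(-(a + ε / 2), a + ε / 2)`,
beyond `T`.
-/

open scoped Manifold Topology NNReal
open Function Set Metric

namespace IsPicardLindelof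

variable {E : Type*} [NormedAddCommGroup E] [NormedSpace ℝ E] [CompleteSpace E]
  {f : ℝ → E → E} {tmin tmax : ℝ} {t₀ : Icc tmin tmax} {x₀ x : E} {a r L K : ℝ≥0}

theorem exists_eq_forall_mem_Icc_hasDerivWithinAt_mem_closedBall
    (hf : IsPicardLindelof f t₀ x₀ a r L K) (hx : x ∈ closedBall x₀ r) :
    ∃ α : ℝ → E, α t₀ = x ∧ ∀ t ∈ Icc tmin tmax,
      HasDerivWithinAt α (f t (α t)) (Icc tmin tmax) t ∧ α t ∈ closedBall x₀ a := by
  obtain ⟨α, hα⟩ := ODE.FunSpace.exists_isFixedPt_next hf hx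
  refine ⟨α.compProj, by rw [ODE.FunSpace.compProj_val, ← hα, ODE.FunSpace.next_apply₀],
    fun t ht ↦ ⟨?_, α.compProj_mem_closedBall hf.mul_max_le⟩⟩
  refine ODE.hasDerivWithinAt_picard_Icc t₀.2 hf.continuousOn_uncurry
    α.continuous_compProj.continuousOn (fun _ _ ↦ α.compProj_mem_closedBall hf.mul_max_le)
    x ht |>.congr_of_mem (fun t' ht' ↦ ?_) ht
  nth_rw 1 [← hα]
  rw [ODE.FunSpace.compProj_of_mem ht', ODE.FunSpace.next_apply]

end IsPicardLindelof

theorem ContDiffAt.exists_pos_eventually_exists_eq_forall_mem_Ioo_hasDerivAt_mem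
    {E : Type*} [NormedAddCommGroup E] [NormedSpace ℝ E] [CompleteSpace E]
    {f : E → E} {x₀ : E} (hf : ContDiffAt ℝ 1 f x₀) {W : Set E} (hW : W ∈ 𝓝 x₀) :
    ∃ ε > (0 : ℝ), ∀ᶠ x in 𝓝 x₀, ∃ α : ℝ → E, α 0 = x ∧
      ∀ t ∈ Ioo (-ε) ε, HasDerivAt α (f (α t)) t ∧ α t ∈ W := by
  obtain ⟨ε, hε, a, r, L, K, hr, hpl⟩ := IsPicardLindelof.of_contDiffAt_one hf
  obtain ⟨δ, hδ, hδW⟩ := nhds_basis_closedBall.mem_iff.mp hW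
  have ha : 0 < a := hr.trans_le <| by
    have := (hpl 0).mul_max_le
    simp only [zero_add, sub_zero, zero_sub, neg_neg, max_self] at this
    exact_mod_cast sub_nonneg.mp ((by positivity : (0 : ℝ) ≤ L * ε).trans this)
  -- Shrinking the ball of the Picard–Lindelöf data into `W` keeps the solutions inside `W`.
  set a' : ℝ≥0 := min a ⟨δ, hδ.le⟩
  have ha' : 0 < a' := lt_min ha hδ
  obtain ⟨ε', hε', hpl'⟩ := (hpl 0).exists_shrink_radius hε (min_le_left _ _) (half_lt_self ha')
  refine ⟨ε', hε', Filter.mem_of_superset (closedBall_mem_nhds x₀ (half_pos ha')) fun x hx ↦ ?_⟩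
  obtain ⟨α, hα0, hα⟩ := hpl'.exists_eq_forall_mem_Icc_hasDerivWithinAt_mem_closedBall hx
  refine ⟨α, hα0, fun t ht ↦ ?_⟩
  have ht' : t ∈ Ioo (0 - ε') (0 + ε') := by simpa using ht
  obtain ⟨hderiv, hmem⟩ := hα t (Ioo_subset_Icc_self ht')
  exact ⟨hderiv.hasDerivAt (Icc_mem_nhds ht'.1 ht'.2),
    hδW (closedBall_subset_closedBall (min_le_right _ _) hmem)⟩

section

variable
  {E : Type*} [NormedAddCommGroup E] [NormedSpace ℝ E]
  {H : Type*} [TopologicalSpace H] {I : ModelWithCorners ℝ E H}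
  {M : Type*} [TopologicalSpace M] [ChartedSpace H M] {v : (x : M) → TangentSpace I x}

theorem IsMIntegralCurveOn.eqOn_add_smul_of_mfderiv_eq
    {F : Type*} [NormedAddCommGroup F] [NormedSpace ℝ F]
    {π : M → F} {w : F} {γ : ℝ → M} {s : Set ℝ} {t₀ : ℝ}
    (hγ : IsMIntegralCurveOn γ v s) (hπ : MDifferentiable I 𝓘(ℝ, F) π)
    (hπv : ∀ p, mfderiv I 𝓘(ℝ, F) π p (v p) = w) (hs : IsOpen s) (hs' : IsPreconnected s)
    (ht₀ : t₀ ∈ s) :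
    EqOn (π ∘ γ) (fun t ↦ π (γ t₀) + (t - t₀) • w) s := by
  have hderiv : ∀ t ∈ s, HasDerivAt (π ∘ γ) w t := by
    intro t ht
    rw [hasDerivAt_iff_hasFDerivAt]
    refine hasMFDerivAt_iff_hasFDerivAt.mp (((hπ (γ t)).hasMFDerivAt.comp t
      (hγ.isMIntegralCurveAt (hs.mem_nhds ht)).hasMFDerivAt).congr_mfderiv ?_)
    ext
    show mfderiv I 𝓘(ℝ, F) π (γ t) ((1 : ℝ) • v (γ t)) = (1 : ℝ) • w
    rw [one_smul, one_smul, hπv]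
  have haffine (t : ℝ) : HasDerivAt (fun t ↦ π (γ t₀) + (t - t₀) • w) w t := by
    simpa using (((hasDerivAt_id t).sub_const t₀).smul_const w).const_add (π (γ t₀))
  exact hs.eqOn_of_deriv_eq hs' (fun t ht ↦ (hderiv t ht).differentiableAt.differentiableWithinAt)
    (fun t _ ↦ (haffine t).differentiableAt.differentiableWithinAt)
    (fun t ht ↦ (hderiv t ht).deriv.trans (haffine t).deriv.symm) ht₀ (by simp)

variable [IsManifold I 1 M]

theorem HasDerivAt.hasMFDerivAt_extChartAt_symm_comp {x₀ : M} {f : ℝ → E} {t : ℝ}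
    (hft : f t ∈ interior (extChartAt I x₀).target)
    {w : TangentSpace I ((extChartAt I x₀).symm (f t))}
    (hf : HasDerivAt f (tangentCoordChange I ((extChartAt I x₀).symm (f t)) x₀
      ((extChartAt I x₀).symm (f t)) w) t) :
    HasMFDerivAt 𝓘(ℝ, ℝ) I ((extChartAt I x₀).symm ∘ f) t ((1 : ℝ →L[ℝ] ℝ).smulRight w) := by
  let y := (extChartAt I x₀).symm (f t)
  have hft' : f t ∈ (extChartAt I x₀).target := interior_subset hft
  have hy₀ : y ∈ (extChartAt I x₀).source := (extChartAt I x₀).map_target hft'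
  have hy : y ∈ (extChartAt I y).source := mem_extChartAt_source y
  refine ⟨(continuousAt_extChartAt_symm'' hft').comp hf.continuousAt, ?_⟩
  simp only [mfld_simps]
  change HasFDerivWithinAt ((extChartAt I y ∘ (extChartAt I x₀).symm) ∘ f)
    ((1 : ℝ →L[ℝ] ℝ).smulRight w) univ t
  rw [hasFDerivWithinAt_univ]
  change HasDerivAt ((extChartAt I y ∘ (extChartAt I x₀).symm) ∘ f) w t
  have hw : tangentCoordChange I x₀ y y (tangentCoordChange I y x₀ y w) = w :=
    (tangentCoordChange_comp ⟨⟨hy, hy₀⟩, hy⟩).trans (tangentCoordChange_self hy)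
  refine (HasFDerivAt.comp_hasDerivAt _ ?_ hf).congr_deriv hw
  refine HasFDerivWithinAt.hasFDerivAt (s := range I) ?_ <|
    Filter.mem_of_superset (isOpen_interior.mem_nhds hft)
      (interior_subset.trans (extChartAt_target_subset_range x₀))
  rw [← (extChartAt I x₀).right_inv hft']
  exact hasFDerivWithinAt_tangentCoordChange ⟨hy₀, hy⟩

theorem eventually_exists_isMIntegralCurveOn_Ioo [CompleteSpace E] {x₀ : M}
    (hv : CMDiffAt 1 (fun x ↦ (⟨x, v x⟩ : TangentBundle I M)) x₀)
    (hx : I.IsInteriorPoint x₀) :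
    ∀ᶠ p : ℝ × M in 𝓝 (0, x₀),
      ∃ γ : ℝ → M, γ 0 = p.2 ∧ IsMIntegralCurveOn γ v (Ioo (-p.1) p.1) := by
  rw [contMDiffAt_iff] at hv
  obtain ⟨ε, hε, hsol⟩ := (hv.2.contDiffAt (range_mem_nhds_isInteriorPoint hx)).snd
    |>.exists_pos_eventually_exists_eq_forall_mem_Ioo_hasDerivAt_mem
      (isOpen_interior.mem_nhds (I.isInteriorPoint_iff.mp hx))
  have hU : ∀ᶠ z in 𝓝 x₀, z ∈ (extChartAt I x₀).source ∧ _ :=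
    Filter.Eventually.and (extChartAt_source_mem_nhds x₀)
      ((continuousAt_extChartAt x₀).eventually hsol)
  filter_upwards [prod_mem_nhds (Ioo_mem_nhds (neg_neg_of_pos hε) hε) hU]
    with ⟨δ, z⟩ ⟨hδ, hz, α, hα0, hα⟩
  refine ⟨(extChartAt I x₀).symm ∘ α,
    by simp only [comp_apply, hα0, (extChartAt I x₀).left_inv hz], fun t ht ↦ ?_⟩
  obtain ⟨hderiv, hmem⟩ := hα t ⟨by linarith [ht.1, hδ.2], by linarith [ht.2, hδ.2]⟩
  let y := (extChartAt I x₀).symm (α t)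
  have hderiv' : HasDerivAt α (fderivWithin ℝ (extChartAt I x₀ ∘ (extChartAt I y).symm)
      (range I) (extChartAt I y y) (v y)) t := hderiv
  rw [← tangentCoordChange_def] at hderiv'
  exact (hderiv'.hasMFDerivAt_extChartAt_symm_comp hmem).hasMFDerivWithinAt

theorem IsCompact.exists_pos_forall_exists_isMIntegralCurveOn_Ioo [CompleteSpace E]
    [BoundarylessManifold I M] (hv : CMDiff 1 (fun x ↦ (⟨x, v x⟩ : TangentBundle I M)))
    {K : Set M} (hK : IsCompact K) :
    ∃ ε > (0 : ℝ), ∀ z ∈ K, ∃ γ : ℝ → M, γ 0 = z ∧ IsMIntegralCurveOn γ v (Ioo (-ε) ε) := by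
  have hsmall := hK.eventually_forall_of_forall_eventually
    (P := fun δ z ↦ ∃ γ : ℝ → M, γ 0 = z ∧ IsMIntegralCurveOn γ v (Ioo (-δ) δ)) fun z _ ↦
    eventually_exists_isMIntegralCurveOn_Ioo (hv z) BoundarylessManifold.isInteriorPoint
  obtain ⟨ε, hεK, hε⟩ := ((hsmall.filter_mono nhdsWithin_le_nhds).and
    (self_mem_nhdsWithin (s := Ioi 0))).exists
  exact ⟨ε, hε, hεK⟩

variable [T2Space M] [BoundarylessManifold I M] {γ : ℝ → M} {a b t₀ ε : ℝ}

theorem IsMIntegralCurveOn.exists_eqOn_isMIntegralCurveOn_union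
    (hv : CMDiff 1 (fun x ↦ (⟨x, v x⟩ : TangentBundle I M)))
    (hγ : IsMIntegralCurveOn γ v (Ioo a b)) (ht₀ : t₀ ∈ Ioo a b) (hε : 0 < ε)
    (h : ∃ γ' : ℝ → M, γ' 0 = γ t₀ ∧ IsMIntegralCurveOn γ' v (Ioo (-ε) ε)) :
    ∃ γ' : ℝ → M, EqOn γ' γ (Ioo a b) ∧
      IsMIntegralCurveOn γ' v (Ioo a b ∪ Ioo (t₀ - ε) (t₀ + ε)) := by
  obtain ⟨γ', hγ'0, hγ'⟩ := h
  have hshift : IsMIntegralCurveOn (γ' ∘ (· + -t₀)) v (Ioo (t₀ - ε) (t₀ + ε)) :=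
    (hγ'.comp_add (-t₀)).mono fun t ht ↦ ⟨by linarith [ht.1], by linarith [ht.2]⟩
  exact ⟨_, piecewise_eqOn _ _ _, isMIntegralCurveOn_piecewise hv hγ hshift
    ⟨ht₀, by linarith, by linarith⟩ (by simp [hγ'0])⟩

theorem IsMIntegralCurveOn.exists_isMIntegralCurveOn_Ioo_add_half
    (hv : CMDiff 1 (fun x ↦ (⟨x, v x⟩ : TangentBundle I M)))
    (hγ : IsMIntegralCurveOn γ v (Ioo (-a) a)) (hε : 0 < ε) (hεa : ε < 4 * a)
    (h : ∀ t ∈ Ioo (-a) a, ∃ γ' : ℝ → M, γ' 0 = γ t ∧ IsMIntegralCurveOn γ' v (Ioo (-ε) ε)) :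
    ∃ γ' : ℝ → M, γ' 0 = γ 0 ∧ IsMIntegralCurveOn γ' v (Ioo (-(a + ε / 2)) (a + ε / 2)) := by
  have h0 : (0 : ℝ) ∈ Ioo (-a) a := ⟨by linarith, by linarith⟩
  have hr : a - ε / 2 ∈ Ioo (-a) a := ⟨by linarith, by linarith⟩
  have hl : -(a - ε / 2) ∈ Ioo (-a) a := ⟨by linarith, by linarith⟩
  obtain ⟨γ₁, hγ₁γ, hγ₁⟩ := hγ.exists_eqOn_isMIntegralCurveOn_union hv hr hε (h _ hr)
  have hγ₁' : IsMIntegralCurveOn γ₁ v (Ioo (-a) (a + ε / 2)) :=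
    hγ₁.mono (Ioo_subset_Ioo_union_Ioo le_rfl (by linarith) (by linarith))
  obtain ⟨γ₂, hγ₂γ₁, hγ₂⟩ := hγ₁'.exists_eqOn_isMIntegralCurveOn_union hv
    ⟨by linarith, by linarith⟩ hε (hγ₁γ hl ▸ h _ hl)
  refine ⟨γ₂, (hγ₂γ₁ ⟨by linarith, by linarith⟩).trans (hγ₁γ h0), hγ₂.mono ?_⟩
  exact (Ioo_subset_Ioo_union_Ioo (by linarith) (by linarith) le_rfl).trans
    (union_comm _ _).subset

theorem exists_isMIntegralCurve_of_forall_mapsTo_isCompact [CompleteSpace E]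
    (hv : CMDiff 1 (fun x ↦ (⟨x, v x⟩ : TangentBundle I M))) (x : M)
    (hK : ∀ T : ℝ, ∃ K : Set M, IsCompact K ∧ ∀ a ≤ T, ∀ γ : ℝ → M, γ 0 = x →
      IsMIntegralCurveOn γ v (Ioo (-a) a) → MapsTo γ (Ioo (-a) a) K) :
    ∃ γ : ℝ → M, γ 0 = x ∧ IsMIntegralCurve γ v := by
  rw [exists_isMIntegralCurve_iff_exists_isMIntegralCurveOn_Ioo hv]
  by_contra! ⟨T, hT⟩
  set s := {a : ℝ | ∃ γ : ℝ → M, γ 0 = x ∧ IsMIntegralCurveOn γ v (Ioo (-a) a)}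
  have hbdd : BddAbove s := ⟨T, fun a ⟨γ, hγ0, hγ⟩ ↦ le_of_not_gt fun hTa ↦
    hT γ hγ0 (hγ.mono (Ioo_subset_Ioo (neg_le_neg hTa.le) hTa.le))⟩
  obtain ⟨K, hKc, hKγ⟩ := hK (sSup s)
  obtain ⟨ε, hε, hεK⟩ := (hKc.insert x).exists_pos_forall_exists_isMIntegralCurveOn_Ioo hv
  have hεs : ε ∈ s := hεK x (mem_insert x K)
  obtain ⟨a, ⟨γ, hγ0, hγ⟩, ha⟩ :=
    exists_lt_of_lt_csSup ⟨ε, hεs⟩ (sub_lt_self (sSup s) (by positivity : 0 < ε / 4))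
  have haS : a ≤ sSup s := le_csSup hbdd ⟨γ, hγ0, hγ⟩
  have hεS : ε ≤ sSup s := le_csSup hbdd hεs
  obtain ⟨γ', hγ'0, hγ'⟩ := hγ.exists_isMIntegralCurveOn_Ioo_add_half hv hε (by linarith)
    fun t ht ↦ hεK _ (mem_insert_of_mem _ (hKγ a haS γ hγ0 hγ ht))
  have := le_csSup hbdd ⟨γ', hγ'0.trans hγ0, hγ'⟩
  linarith

end

theorem flow_complete_of_proper_of_mfderiv_eq_const_general
    {d m : ℕ} (M : Type) [TopologicalSpace M] [T2Space M]
    [ChartedSpace (EuclideanSpace ℝ (Fin d)) M]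
    [IsManifold (𝓡 d) ((⊤ : ℕ∞) : WithTop ℕ∞) M]
    (π : M → EuclideanSpace ℝ (Fin m))
    (hπsmooth : ContMDiff (𝓡 d) (𝓡 m) (⊤ : ℕ∞) π)
    (hπproper : ∀ K : Set (EuclideanSpace ℝ (Fin m)), IsCompact K →
      IsCompact (π ⁻¹' K))
    (v : EuclideanSpace ℝ (Fin m))
    (χ : (x : M) → TangentSpace (𝓡 d) x)
    (hχsmooth : ContMDiff (𝓡 d) (𝓡 d).tangent (⊤ : ℕ∞)
      (fun x => (⟨x, χ x⟩ : TangentBundle (𝓡 d) M)))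
    (hχlift : ∀ p : M, mfderiv (𝓡 d) (𝓡 m) π p (χ p) = v) :
    ∀ x : M, ∃ γ : ℝ → M, γ 0 = x ∧ IsMIntegralCurve γ χ := by
  intro x
  refine exists_isMIntegralCurve_of_forall_mapsTo_isCompact (hχsmooth.of_le (by simp)) x
    fun T ↦ ⟨π ⁻¹' closedBall (π x) (T * ‖v‖), hπproper _ (isCompact_closedBall _ _),
      fun a haT γ hγ0 hγ t ht ↦ ?_⟩
  have h0 : (0 : ℝ) ∈ Ioo (-a) a := ⟨by linarith [ht.1, ht.2], by linarith [ht.1, ht.2]⟩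
  have hline : π (γ t) = π x + t • v := by
    simpa [hγ0] using hγ.eqOn_add_smul_of_mfderiv_eq (hπsmooth.mdifferentiable (by simp))
      hχlift isOpen_Ioo isPreconnected_Ioo h0 ht
  rw [mem_preimage, hline, mem_closedBall, dist_self_add_left, norm_smul, Real.norm_eq_abs]
  exact mul_le_mul_of_nonneg_right ((abs_lt.mpr ht).le.trans haT) (norm_nonneg v)

/-- If `π : M → ℝ^m` is a smooth proper map and `χ` is a smooth
vector field on `M` with `dπ_p (χ p) = v` everywhere, then the flow of `χ` is
complete: through every point there is an integral curve of `χ` defined on all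
of `ℝ`. -/
theorem flow_complete_of_proper_of_mfderiv_eq_const
    {d m : ℕ} (M : Type) [TopologicalSpace M] [T2Space M]
    [SecondCountableTopology M] [ChartedSpace (EuclideanSpace ℝ (Fin d)) M]
    [IsManifold (𝓡 d) ((⊤ : ℕ∞) : WithTop ℕ∞) M]
    (π : M → EuclideanSpace ℝ (Fin m))
    (hπsmooth : ContMDiff (𝓡 d) (𝓡 m) (⊤ : ℕ∞) π)
    (hπproper : ∀ K : Set (EuclideanSpace ℝ (Fin m)), IsCompact K →
      IsCompact (π ⁻¹' K))
    (v : EuclideanSpace ℝ (Fin m))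
    (χ : (x : M) → TangentSpace (𝓡 d) x)
    (hχsmooth : ContMDiff (𝓡 d) (𝓡 d).tangent (⊤ : ℕ∞)
      (fun x => (⟨x, χ x⟩ : TangentBundle (𝓡 d) M)))
    (hχlift : ∀ p : M, mfderiv (𝓡 d) (𝓡 m) π p (χ p) = v) :
    ∀ x : M, ∃ γ : ℝ → M, γ 0 = x ∧ IsMIntegralCurve γ χ :=
  flow_complete_of_proper_of_mfderiv_eq_const_general M π hπsmooth hπproper v χ hχsmooth hχlift
end

section
/- Let ℍ = {u ∈ ℂ : Im u > 0} be the upper half plane, and for u ∈ ℍ let Λ_u = ℤ + ℤ·u ⊆ ℂ denote the additive subgroup of ℂ generated by 1 and u. Suppose a : ℍ → ℂ is a continuous function such that a(u) · Λ_u = Λ_u (as subsets of ℂ) for every u ∈ ℍ. Then either a(u) = 1 for all u ∈ ℍ, or a(u) = −1 for all u ∈ ℍ. -/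
/-!
Writing `a u = M u + N u * u` with integers `M u`, `N u`, these coordinates are continuous
functions of `u` (`N u = Im (a u) / Im u`), hence constant on the connected space `ℍ`. Since
`1 ∈ a u • Λ_u`, the same holds for `(a u)⁻¹`, so `(m + n u) (m' + n' u) = 1` for all `u`;
comparing `u = i` with `u = 2i` forces `n = 0` and `m = ±1`.
-/

open UpperHalfPlane

namespace UpperHalfPlane

def lattice (u : ℍ) : Set ℂ := {z : ℂ | ∃ m n : ℤ, z = (m : ℂ) + (n : ℂ) * (u : ℂ)}

lemma one_mem_lattice (u : ℍ) : (1 : ℂ) ∈ lattice u := ⟨1, 0, by simp⟩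

lemma exists_forall_eq_of_continuous_mem_lattice {f : ℍ → ℂ} (hf : Continuous f)
    (hmem : ∀ u, f u ∈ lattice u) :
    ∃ m n : ℤ, ∀ u : ℍ, f u = (m : ℂ) + (n : ℂ) * (u : ℂ) := by
  choose M N hMN using hmem
  have hN : ∀ u : ℍ, (N u : ℝ) = (f u).im / u.im := fun u => by
    rw [hMN u, eq_div_iff u.im_ne_zero]; simp
  have hM : ∀ u : ℍ, (M u : ℝ) = (f u).re - N u * u.re := fun u => by
    rw [hMN u]; simp
  have hN_cont : Continuous fun u => (N u : ℝ) := by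
    simp only [hN]
    exact (Complex.continuous_im.comp hf).div continuous_im fun u => u.im_ne_zero
  have hM_cont : Continuous fun u => (M u : ℝ) := by
    simp only [hM]
    exact (Complex.continuous_re.comp hf).sub (hN_cont.mul continuous_re)
  have hconst {g : ℍ → ℤ} (hg : Continuous fun u => (g u : ℝ)) (u v : ℍ) : g u = g v :=
    PreconnectedSpace.constant inferInstance
      (Int.isClosedEmbedding_coe_real.isEmbedding.continuous_iff.2 hg)
  refine ⟨M I, N I, fun u => ?_⟩
  rw [hMN u, hconst hM_cont u I, hconst hN_cont u I]

lemma eq_zero_and_isUnit_of_forall_mul_eq_one {m n m' n' : ℤ}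
    (h : ∀ u : ℍ, ((m : ℂ) + n * u) * ((m' : ℂ) + n' * u) = 1) :
    n = 0 ∧ IsUnit m := by
  have hI : ((m : ℂ) + n * Complex.I) * (m' + n' * Complex.I) = 1 := h I
  have h2I : ((m : ℂ) + n * (2 * Complex.I)) * (m' + n' * (2 * Complex.I)) = 1 :=
    h ⟨2 * Complex.I, by simp⟩
  have e₁ : (m * m' - n * n' : ℝ) = 1 := by simpa using congrArg Complex.re hI
  have e₂ : (m * n' + n * m' : ℝ) = 0 := by simpa using congrArg Complex.im hI
  have e₃ : (m * m' - n * 2 * (n' * 2) : ℝ) = 1 := by simpa using congrArg Complex.re h2I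
  have hmm' : m * m' = 1 := by exact_mod_cast (by linarith : (m * m' : ℝ) = 1)
  have hnn' : n * n' = 0 := by exact_mod_cast (by linarith : (n * n' : ℝ) = 0)
  have hmn' : m * n' + n * m' = 0 := by exact_mod_cast e₂
  rcases Int.eq_one_or_neg_one_of_mul_eq_one' hmm' with ⟨rfl, rfl⟩ | ⟨rfl, rfl⟩
  · exact ⟨by nlinarith, isUnit_one⟩
  · exact ⟨by nlinarith, isUnit_one.neg⟩

end UpperHalfPlane

/-- If `a : ℍ → ℂ` is continuous and multiplication by `a u`
preserves the lattice `Λ_u = ℤ + ℤ·u` for every `u ∈ ℍ`, then `a ≡ 1` or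
`a ≡ -1`. -/
theorem continuous_lattice_preserving_is_pm_one
    (a : ℍ → ℂ) (ha : Continuous a)
    (hlat : ∀ u : ℍ,
      (fun z : ℂ => a u * z) '' {z : ℂ | ∃ m n : ℤ, z = (m : ℂ) + (n : ℂ) * (u : ℂ)}
        = {z : ℂ | ∃ m n : ℤ, z = (m : ℂ) + (n : ℂ) * (u : ℂ)}) :
    (∀ u : ℍ, a u = 1) ∨ (∀ u : ℍ, a u = -1) := by
  change ∀ u, (a u * ·) '' lattice u = lattice u at hlat
  have ha_mem : ∀ u, a u ∈ lattice u := fun u =>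
    hlat u ▸ ⟨1, one_mem_lattice u, mul_one _⟩
  have hinv : ∀ u, a u ≠ 0 ∧ (a u)⁻¹ ∈ lattice u := fun u => by
    obtain ⟨z, hz, hz1⟩ := (hlat u).symm ▸ one_mem_lattice u
    exact ⟨left_ne_zero_of_mul_eq_one hz1, inv_eq_of_mul_eq_one_right hz1 ▸ hz⟩
  obtain ⟨m, n, hmn⟩ := exists_forall_eq_of_continuous_mem_lattice ha ha_mem
  obtain ⟨m', n', hmn'⟩ := exists_forall_eq_of_continuous_mem_lattice (f := fun u => (a u)⁻¹)
    (ha.inv₀ fun u => (hinv u).1) fun u => (hinv u).2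
  obtain ⟨rfl, hm⟩ := eq_zero_and_isUnit_of_forall_mul_eq_one (m' := m') (n' := n') fun u => by
    rw [← hmn u, ← hmn' u, mul_inv_cancel₀ (hinv u).1]
  rcases Int.isUnit_iff.1 hm with rfl | rfl
  · exact Or.inl fun u => by simp [hmn]
  · exact Or.inr fun u => by simp [hmn]
end
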